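/- arXiv:2509.08531 — 2 statements merged into one kernel-verified Lean document; each statement's English description precedes it below -/
import Mathlib

section
/- Let G be a graph with a 2-coloring of its vertices in red and blue. Let M_R be the set of red vertices with strictly more blue neighbors than red neighbors, and M_B the set of blue vertices with strictly more red neighbors than blue neighbors. If I is an independent set in G contained in M_R ∪ M_B, then swapping the color of every vertex of I yields a coloring whose cut (number of bichromatic edges) is smaller by at least |I| than the original cut. -/
open SimpleGraph Finset

variable {V : Type*}

/-- The number of bichromatic edges of `G` under the red/blue coloring `c`
(`true` = red, `false` = blue). -/
def cutB [Fintype V] [DecidableEq V] (G : SimpleGraph V) [DecidableRel G.Adj]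
    (c : V → Bool) : ℕ :=
  (G.edgeFinset.filter (fun e => ¬ (e.map c).IsDiag)).card

/-- The number of neighbors of `v` having color `b`. -/
def nbrColor [Fintype V] [DecidableEq V] (G : SimpleGraph V) [DecidableRel G.Adj]
    (c : V → Bool) (b : Bool) (v : V) : ℕ :=
  ((G.neighborFinset v).filter (fun w => c w = b)).card

/-- `v` is miscolored: red with strictly more blue neighbors than red neighbors,
or blue with strictly more red neighbors than blue neighbors. -/
def Miscolored [Fintype V] [DecidableEq V] (G : SimpleGraph V) [DecidableRel G.Adj]
    (c : V → Bool) (v : V) : Prop :=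
  (c v = true ∧ nbrColor G c true v < nbrColor G c false v) ∨
  (c v = false ∧ nbrColor G c false v < nbrColor G c true v)

/-! Flipping a single vertex `v` turns the bichromatic edges at `v` monochromatic and vice versa,
so the cut drops by the number of neighbours of the other colour minus the number of the same
colour, which is at least one when `v` is miscolored. Flipping vertices of `I` other than `v`
changes neither `v` nor its neighbours, as `I` is independent, so `v` stays miscolored and the
vertices of `I` can be flipped one at a time. -/

section

variable [Fintype V] [DecidableEq V] {G : SimpleGraph V} [DecidableRel G.Adj]

lemma nbrColor_congr {c d : V → Bool} {v : V} (h : ∀ w, G.Adj v w → d w = c w) (b : Bool) :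
    nbrColor G d b v = nbrColor G c b v := by
  unfold nbrColor
  congr 1
  exact filter_congr fun w hw => by rw [h w ((mem_neighborFinset ..).1 hw)]

lemma miscolored_iff {c : V → Bool} {v : V} :
    Miscolored G c v ↔ nbrColor G c (c v) v < nbrColor G c (!c v) v := by
  unfold Miscolored
  cases c v <;> simp

lemma miscolored_congr {c d : V → Bool} {v : V} (hv : d v = c v)
    (h : ∀ w, G.Adj v w → d w = c w) : Miscolored G d v ↔ Miscolored G c v := by
  simp only [miscolored_iff, hv, nbrColor_congr h]

lemma card_bichromatic_incident (c : V → Bool) (v : V) :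
    #{e ∈ G.edgeFinset | v ∈ e ∧ ¬(e.map c).IsDiag} = nbrColor G c (!c v) v := by
  symm
  apply card_nbij (fun w => s(v, w))
  · intro w hw
    simp_all
  · intro w _ w' _ h
    exact Sym2.congr_right.1 h
  · intro e he
    simp only [coe_filter, Set.mem_ofPred_eq, mem_edgeFinset] at he
    obtain ⟨w, rfl⟩ := Sym2.mem_iff_exists.1 he.2.1
    refine ⟨w, ?_, rfl⟩
    simpa [nbrColor, Bool.eq_not_iff, ne_comm] using he

lemma cutB_eq_nbrColor_add (c : V → Bool) (v : V) :
    cutB G c = nbrColor G c (!c v) v + #{e ∈ G.edgeFinset | v ∉ e ∧ ¬(e.map c).IsDiag} := by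
  rw [← card_bichromatic_incident, cutB,
    ← card_filter_add_card_filter_not (s := {e ∈ G.edgeFinset | ¬(e.map c).IsDiag}) (v ∈ ·),
    filter_filter, filter_filter]
  simp only [and_comm]

lemma cutB_update_add (c : V → Bool) (v : V) :
    cutB G (Function.update c v (!c v)) + nbrColor G c (!c v) v =
      cutB G c + nbrColor G c (c v) v := by
  have hoff : #{e ∈ G.edgeFinset | v ∉ e ∧ ¬(e.map (Function.update c v (!c v))).IsDiag} =
      #{e ∈ G.edgeFinset | v ∉ e ∧ ¬(e.map c).IsDiag} := by
    congr 1
    refine filter_congr fun e _ => and_congr_right fun hve => ?_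
    rw [Sym2.map_congr fun w hw => Function.update_of_ne (ne_of_mem_of_not_mem hw hve) _ _]
  have hnbr : nbrColor G (Function.update c v (!c v)) (c v) v = nbrColor G c (c v) v :=
    nbrColor_congr (fun w hw => Function.update_of_ne hw.ne' _ _) _
  rw [cutB_eq_nbrColor_add _ v, cutB_eq_nbrColor_add c v, hoff, Function.update_self,
    Bool.not_not, hnbr]
  ring

lemma cutB_update_add_one_le {c : V → Bool} {v : V} (hv : Miscolored G c v) :
    cutB G (Function.update c v (!c v)) + 1 ≤ cutB G c := by
  have := cutB_update_add (G := G) c v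
  rw [miscolored_iff] at hv
  omega

end

/-- Swapping the colors of an independent set of miscolored vertices decreases
the cut by at least the size of the set. -/
theorem stmt0 [Fintype V] [DecidableEq V] (G : SimpleGraph V) [DecidableRel G.Adj]
    (c : V → Bool) (I : Finset V)
    (hind : ∀ u ∈ I, ∀ w ∈ I, ¬ G.Adj u w)
    (hmis : ∀ v ∈ I, Miscolored G c v) :
    cutB G (fun v => if v ∈ I then !(c v) else c v) + I.card ≤ cutB G c := by
  induction I using Finset.induction_on with
  | empty => simp
  | insert v J hvJ ih =>
    set d : V → Bool := fun w => if w ∈ J then !(c w) else c w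
    have hdv : d v = c v := if_neg hvJ
    have hflip :
        (fun w => if w ∈ insert v J then !(c w) else c w) = Function.update d v (!d v) := by
      funext w
      by_cases hw : w = v
      · subst hw; simp [hdv]
      · simp [hw, d]
    have hmis_v : Miscolored G d v := by
      refine (miscolored_congr hdv fun w hw => if_neg fun hwJ => ?_).2
        (hmis v (mem_insert_self v J))
      exact hind v (mem_insert_self v J) w (mem_insert_of_mem hwJ) hw
    have hJ := ih (fun u hu w hw => hind u (mem_insert_of_mem hu) w (mem_insert_of_mem hw))
      (fun u hu => hmis u (mem_insert_of_mem hu))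
    rw [hflip, card_insert_of_notMem hvJ]
    have hv := cutB_update_add_one_le hmis_v
    omega
end

section
/- In a 5-regular graph G with a red/blue coloring, let M be the set of miscolored vertices: red vertices with at least 3 blue neighbors together with blue vertices with at least 3 red neighbors. Then the bipartite graph induced between the miscolored red vertices and the miscolored blue vertices has maximum degree at most 5, and if I is a bihole of this bipartite graph of size m + m, swapping all vertices of I preserves the balance of a bisection (the sizes of the two color classes are unchanged) and decreases the cut by at least 2m. -/
open SimpleGraph Finset

variable {V : Type*}

/-!
Counting every bichromatic edge from both of its endpoints gives
`2 * cutB G c = ∑ v, nbrColor G c (!c v) v`. When `I` is independent, no edge has both endpoints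
in `I`, and recolouring `I` toggles exactly the edges with one endpoint in `I`; so the cut changes
by `∑ v ∈ I, (nbrColor G c (c v) v - nbrColor G c (!c v) v)`. A miscoloured vertex of degree 5 has
at least 3 neighbours of the other colour and at most 2 of its own, so each of the `2m` vertices
of the bihole lowers the cut by at least 1. The colour classes keep their sizes because the
bihole has as many red as blue vertices.
-/

namespace SimpleGraph

variable [Fintype V] (G : SimpleGraph V) [DecidableRel G.Adj]

lemma sum_sum_neighborFinset_comm {M : Type*} [AddCommMonoid M] (f : V → V → M) :
    ∑ v, ∑ w ∈ G.neighborFinset v, f v w = ∑ v, ∑ w ∈ G.neighborFinset v, f w v :=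
  sum_comm' fun v w => by simp [adj_comm]

end SimpleGraph

section Counting

variable [Fintype V] [DecidableEq V] (G : SimpleGraph V) [DecidableRel G.Adj]

lemma nbrColor_eq_sum (c : V → Bool) (b : Bool) (v : V) :
    nbrColor G c b v = ∑ w ∈ G.neighborFinset v, if c w = b then 1 else 0 :=
  card_filter _ _

lemma nbrColor_add_nbrColor_not (c : V → Bool) (b : Bool) (v : V) :
    nbrColor G c b v + nbrColor G c (!b) v = G.degree v := by
  rw [← card_neighborFinset_eq_degree, ← card_filter_add_card_filter_not (fun w => c w = b)]
  simp [nbrColor, Bool.eq_not_iff]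

lemma two_mul_cutB (c : V → Bool) : 2 * cutB G c = ∑ v, nbrColor G c (!c v) v := by
  let H := G ⊓ (⊤ : SimpleGraph Bool).comap c
  calc 2 * cutB G c = 2 * #H.edgeFinset := by
        rw [cutB]
        congr 2
        ext e
        induction e using Sym2.ind with
        | _ u v => simp [H, mem_edgeFinset]
    _ = ∑ v, H.degree v := by convert (sum_degrees_eq_twice_card_edges H).symm
    _ = ∑ v, nbrColor G c (!c v) v := sum_congr rfl fun v _ => by
        rw [← card_neighborFinset_eq_degree, nbrColor]
        congr 1
        ext w
        simp [H, Bool.eq_not_iff, eq_comm]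

end Counting

def recolor [DecidableEq V] (I : Finset V) (c : V → Bool) (v : V) : Bool :=
  if v ∈ I then !(c v) else c v

lemma card_filter_recolor [Fintype V] [DecidableEq V] {I : Finset V} {c : V → Bool}
    (hbal : #(I.filter (c · = true)) = #(I.filter (c · = false))) :
    #(univ.filter (recolor I c · = true)) = #(univ.filter (c · = true)) := by
  simp only [card_filter] at hbal ⊢
  rw [← sum_add_sum_compl I, ← sum_add_sum_compl I (fun v => if c v = true then 1 else 0)]
  have hin : ∑ v ∈ I, (if recolor I c v = true then 1 else 0)
      = ∑ v ∈ I, if c v = false then 1 else 0 :=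
    sum_congr rfl fun v hv => by simp [recolor, hv]
  have hout : ∑ v ∈ Iᶜ, (if recolor I c v = true then 1 else 0)
      = ∑ v ∈ Iᶜ, if c v = true then 1 else 0 :=
    sum_congr rfl fun v hv => by simp [recolor, mem_compl.mp hv]
  rw [hin, hout, hbal]

section Recolor

variable [Fintype V] [DecidableEq V] {G : SimpleGraph V} [DecidableRel G.Adj] {I : Finset V}

lemma cutB_recolor (hI : ∀ u ∈ I, ∀ w ∈ I, ¬ G.Adj u w) (c : V → Bool) :
    (cutB G (recolor I c) : ℤ)
      = cutB G c + ∑ v ∈ I, ((nbrColor G c (c v) v : ℤ) - nbrColor G c (!c v) v) := by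
  let D : V → V → ℤ := fun v w =>
    (if c w = c v then 1 else 0) - if c w = !c v then 1 else 0
  have hflip : ∀ v, ∀ w ∈ G.neighborFinset v,
      (if recolor I c w = !recolor I c v then (1 : ℤ) else 0)
        = (if c w = !c v then 1 else 0) + (if v ∈ I then D v w else 0)
          + (if w ∈ I then D w v else 0) := by
    intro v w hadj
    by_cases hv : v ∈ I <;> by_cases hw : w ∈ I
    · exact absurd ((mem_neighborFinset _ _ _).1 hadj) (hI v hv w hw)
    all_goals simp only [recolor, D, hv, hw, if_true, if_false]; cases c v <;> cases c w <;> simp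
  have hD : ∑ v, ∑ w ∈ G.neighborFinset v, (if v ∈ I then D v w else 0)
      = ∑ v ∈ I, ((nbrColor G c (c v) v : ℤ) - nbrColor G c (!c v) v) := by
    calc ∑ v, ∑ w ∈ G.neighborFinset v, (if v ∈ I then D v w else 0)
        = ∑ v, if v ∈ I then ∑ w ∈ G.neighborFinset v, D v w else 0 :=
          sum_congr rfl fun v _ => by split_ifs <;> simp
      _ = ∑ v ∈ I, ∑ w ∈ G.neighborFinset v, D v w := by rw [sum_ite_mem, univ_inter]
      _ = _ := sum_congr rfl fun v _ => by
          simp only [D, sum_sub_distrib, nbrColor_eq_sum, Nat.cast_sum, Nat.cast_ite, Nat.cast_one,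
            Nat.cast_zero]
  have hcut' := congrArg (Nat.cast : ℕ → ℤ) (two_mul_cutB G (recolor I c))
  have hcut := congrArg (Nat.cast : ℕ → ℤ) (two_mul_cutB G c)
  push_cast [nbrColor_eq_sum] at hcut hcut'
  rw [sum_congr rfl fun v _ => sum_congr rfl (hflip v)] at hcut'
  simp only [sum_add_distrib] at hcut'
  rw [sum_sum_neighborFinset_comm G (fun v w => if w ∈ I then D w v else 0), hD] at hcut'
  linarith

lemma cutB_recolor_add_card_le (hI : ∀ u ∈ I, ∀ w ∈ I, ¬ G.Adj u w) {c : V → Bool}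
    (hgain : ∀ v ∈ I, nbrColor G c (c v) v < nbrColor G c (!c v) v) :
    cutB G (recolor I c) + #I ≤ cutB G c := by
  have hsum : ∑ v ∈ I, ((nbrColor G c (c v) v : ℤ) - nbrColor G c (!c v) v) ≤ -#I := by
    simpa using sum_le_sum fun v hv => (by have := hgain v hv; omega :
      (nbrColor G c (c v) v : ℤ) - nbrColor G c (!c v) v ≤ -1)
  have := cutB_recolor hI c
  omega

end Recolor

/-- In a 5-regular graph with coloring `c`, the bipartite graph between the
miscolored red vertices (red with at least 3 blue neighbors) and the miscolored
blue vertices has maximum degree at most 5; and swapping the vertices of a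
bihole of size `m + m` which is independent in `G` keeps the sizes of the color
classes unchanged and decreases the cut by at least `2m`. -/
theorem stmt14 [Fintype V] [DecidableEq V] (G : SimpleGraph V) [DecidableRel G.Adj]
    (hreg : G.IsRegularOfDegree 5) (c : V → Bool)
    (MR MB : Finset V)
    (hMR : MR = Finset.univ.filter (fun v => c v = true ∧ 3 ≤ nbrColor G c false v))
    (hMB : MB = Finset.univ.filter (fun v => c v = false ∧ 3 ≤ nbrColor G c true v))
    (I : Finset V) (m : ℕ) (hI : I ⊆ MR ∪ MB)
    (hIR : (I ∩ MR).card = m) (hIB : (I ∩ MB).card = m)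
    (hind : ∀ u ∈ I, ∀ w ∈ I, ¬ G.Adj u w) :
    (∀ v ∈ MR, (G.neighborFinset v ∩ MB).card ≤ 5) ∧
    (∀ v ∈ MB, (G.neighborFinset v ∩ MR).card ≤ 5) ∧
    (Finset.univ.filter (fun v => (if v ∈ I then !(c v) else c v) = true)).card
      = (Finset.univ.filter (fun v => c v = true)).card ∧
    cutB G (fun v => if v ∈ I then !(c v) else c v) + 2 * m ≤ cutB G c := by
  have hmis : ∀ v ∈ I, (v ∈ MR ↔ c v = true) ∧ (v ∈ MB ↔ c v = false)
      ∧ 3 ≤ nbrColor G c (!c v) v := by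
    intro v hv
    have hv' := hI hv
    rw [hMR, hMB] at hv' ⊢
    cases hc : c v <;> simpa [hc] using hv'
  have hred : #(I.filter (c · = true)) = m := by
    rw [← hIR, ← filter_mem_eq_inter, filter_congr fun v hv => (hmis v hv).1]
  have hblue : #(I.filter (c · = false)) = m := by
    rw [← hIB, ← filter_mem_eq_inter, filter_congr fun v hv => (hmis v hv).2.1]
  have hcard : #I = 2 * m := by
    rw [← card_filter_add_card_filter_not (p := (c · = true))]
    simp only [Bool.not_eq_true, hred, hblue]
    omega
  have hdeg : ∀ v S, #(G.neighborFinset v ∩ S) ≤ 5 := fun v S =>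
    (card_le_card inter_subset_left).trans (by rw [card_neighborFinset_eq_degree, hreg v])
  refine ⟨fun v _ => hdeg v _, fun v _ => hdeg v _, card_filter_recolor (hred.trans hblue.symm), ?_⟩
  have hgain : ∀ v ∈ I, nbrColor G c (c v) v < nbrColor G c (!c v) v := fun v hv => by
    have h5 := nbrColor_add_nbrColor_not G c (c v) v
    rw [hreg v] at h5
    have := (hmis v hv).2.2
    omega
  exact hcard ▸ cutB_recolor_add_card_le hind hgain
end
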